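/- arXiv:2307.07107 — 4 statements merged into one kernel-verified Lean document; each statement's English description precedes it below -/
import Mathlib

section
/- Let G be a finite simple graph and (i,j) an edge of G whose endpoint degrees satisfy d_i ≥ d_j. Then the triangle-only balanced Forman curvature satisfies Ric₀_G(i,j) − Ric₀_{G^{+VN}}(i,j) ≤ 1/(d_j² + d_j) − 2(d_i − d_j)/(d_i² + d_i). -/
open Finset

attribute [local instance] Classical.propDecidable

variable {V : Type*} [Fintype V] [DecidableEq V]

/-- The virtual-node graph `G^{+VN}`: vertex set `V ∪ {v*}` (here `Option V`, with `none`
playing the role of the virtual node `v*`), original adjacency on `V`, and the virtual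
node adjacent to every original vertex. -/
def addVN (G : SimpleGraph V) : SimpleGraph (Option V) where
  Adj u v :=
    match u, v with
    | some a, some b => G.Adj a b
    | some _, none => True
    | none, some _ => True
    | none, none => False
  symm := by
    constructor
    intro u v h
    cases u <;> cases v <;> simp_all
    exact G.adj_symm h
  loopless := by
    constructor
    intro u h
    cases u <;> simp_all

/-- `#Δ(i,j)`: number of triangles containing the edge `(i,j)`, i.e. common neighbors. -/
noncomputable def triCount (G : SimpleGraph V) (i j : V) : ℕ :=
  (G.neighborFinset i ∩ G.neighborFinset j).card

/-- `#□^i(i,j)`: number of diagonal-free 4-cycles based at the edge `(i,j)`, seen from `i`. -/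
noncomputable def sqCount (G : SimpleGraph V) (i j : V) : ℕ :=
  ((G.neighborFinset i).filter (fun k => k ≠ j ∧ ¬ G.Adj k j ∧
    ∃ w, G.Adj w k ∧ G.Adj w j ∧ w ≠ i ∧ ¬ G.Adj w i)).card

/-- The diagonal-free 4-cycles based at the edge `(i,j)`, as pairs `(k, w)`. -/
noncomputable def fourCycles (G : SimpleGraph V) (i j : V) : Finset (V × V) :=
  Finset.univ.filter (fun p => G.Adj i p.1 ∧ p.1 ≠ j ∧ ¬ G.Adj p.1 j ∧
    G.Adj p.2 p.1 ∧ G.Adj p.2 j ∧ p.2 ≠ i ∧ ¬ G.Adj p.2 i)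

/-- `γ_max(i,j)`: maximum over nodes `k` of the number of diagonal-free 4-cycles based at
`(i,j)` passing through `k`. -/
noncomputable def gammaMax (G : SimpleGraph V) (i j : V) : ℕ :=
  Finset.univ.sup (fun x => ((fourCycles G i j).filter (fun p => p.1 = x ∨ p.2 = x)).card)

/-- The balanced Forman curvature of the edge `(i,j)`. -/
noncomputable def Ric (G : SimpleGraph V) (i j : V) : ℝ :=
  2 / (G.degree i : ℝ) + 2 / (G.degree j : ℝ) - 2
    + (triCount G i j : ℝ) *
        (2 / (max (G.degree i) (G.degree j) : ℝ) + 1 / (min (G.degree i) (G.degree j) : ℝ))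
    + ((gammaMax G i j : ℝ) / (max (G.degree i) (G.degree j) : ℝ)) *
        ((sqCount G i j : ℝ) + (sqCount G j i : ℝ))

/-- The triangle-only balanced Forman curvature `Ric₀` of the edge `(i,j)`. -/
noncomputable def Ric₀ (G : SimpleGraph V) (i j : V) : ℝ :=
  2 / (G.degree i : ℝ) + 2 / (G.degree j : ℝ) - 2
    + (triCount G i j : ℝ) *
        (2 / (max (G.degree i) (G.degree j) : ℝ) + 1 / (min (G.degree i) (G.degree j) : ℝ))

/-! Adding the virtual node raises both degrees and the number of common neighbours of `i` and `j`
by one. With `a = d_i`, `b = d_j`, `t = #Δ(i,j)`, the drop of `Ric₀` is exactly the claimed bound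
plus `(t + 1 - b) * (2 / (a² + a) + 1 / (b² + b))`, and this correction is nonpositive because
the common neighbours of `i` and `j` are neighbours of `j` other than `i`. -/

lemma neighborFinset_addVN_some (G : SimpleGraph V) (i : V) :
    (addVN G).neighborFinset (some i) = insert none ((G.neighborFinset i).image some) := by
  ext x
  cases x <;> simp only [SimpleGraph.mem_neighborFinset] <;> simp [addVN]

lemma degree_addVN_some (G : SimpleGraph V) (i : V) :
    (addVN G).degree (some i) = G.degree i + 1 := by
  rw [← SimpleGraph.card_neighborFinset_eq_degree, neighborFinset_addVN_some,
    card_insert_of_notMem (by simp), card_image_of_injective _ (Option.some_injective V),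
    SimpleGraph.card_neighborFinset_eq_degree]

lemma triCount_addVN_some (G : SimpleGraph V) (i j : V) :
    triCount (addVN G) (some i) (some j) = triCount G i j + 1 := by
  have hinter : (addVN G).neighborFinset (some i) ∩ (addVN G).neighborFinset (some j)
      = insert none ((G.neighborFinset i ∩ G.neighborFinset j).image some) := by
    rw [neighborFinset_addVN_some, neighborFinset_addVN_some,
      ← insert_inter_distrib, image_inter _ _ (Option.some_injective V)]
  rw [triCount, hinter, card_insert_of_notMem (by simp),
    card_image_of_injective _ (Option.some_injective V), triCount]

lemma triCount_lt_degree_right {G : SimpleGraph V} {i j : V} (hij : G.Adj i j) :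
    triCount G i j < G.degree j := by
  rw [triCount, ← SimpleGraph.card_neighborFinset_eq_degree]
  refine card_lt_card ⟨inter_subset_right, fun h => ?_⟩
  have hi : i ∈ G.neighborFinset i ∩ G.neighborFinset j := h (by simp [hij.symm])
  simp at hi

noncomputable def ric₀Formula (a b t : ℝ) : ℝ :=
  2 / a + 2 / b - 2 + t * (2 / a + 1 / b)

lemma Ric₀_eq_ric₀Formula {G : SimpleGraph V} {i j : V} (h : G.degree j ≤ G.degree i) :
    Ric₀ G i j = ric₀Formula (G.degree i) (G.degree j) (triCount G i j) := by
  have h' : (G.degree j : ℝ) ≤ G.degree i := by exact_mod_cast h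
  rw [Ric₀, ric₀Formula, max_eq_left h', min_eq_right h']

lemma ric₀Formula_sub_succ_eq {a b : ℝ} (t : ℝ) (ha : 0 < a) (hb : 0 < b) :
    ric₀Formula a b t - ric₀Formula (a + 1) (b + 1) (t + 1)
      = 1 / (b ^ 2 + b) - 2 * (a - b) / (a ^ 2 + a)
        + (t + 1 - b) * (2 / (a ^ 2 + a) + 1 / (b ^ 2 + b)) := by
  unfold ric₀Formula
  field_simp
  ring

lemma ric₀Formula_sub_succ_le {a b t : ℝ} (ha : 0 < a) (hb : 0 < b) (ht : t + 1 ≤ b) :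
    ric₀Formula a b t - ric₀Formula (a + 1) (b + 1) (t + 1)
      ≤ 1 / (b ^ 2 + b) - 2 * (a - b) / (a ^ 2 + a) := by
  rw [ric₀Formula_sub_succ_eq t ha hb, add_le_iff_nonpos_right]
  exact mul_nonpos_of_nonpos_of_nonneg (by linarith) (by positivity)

/-- For an edge `(i,j)` of a finite simple graph `G` with `d_i ≥ d_j`,
the triangle-only balanced Forman curvature satisfies
`Ric₀_G(i,j) − Ric₀_{G^{+VN}}(i,j) ≤ 1/(d_j² + d_j) − 2(d_i − d_j)/(d_i² + d_i)`. -/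
theorem stmt_1 (G : SimpleGraph V) (i j : V) (hij : G.Adj i j)
    (hd : G.degree j ≤ G.degree i) :
    Ric₀ G i j - Ric₀ (addVN G) (some i) (some j)
      ≤ 1 / ((G.degree j : ℝ) ^ 2 + (G.degree j : ℝ))
        - 2 * ((G.degree i : ℝ) - (G.degree j : ℝ)) / ((G.degree i : ℝ) ^ 2 + (G.degree i : ℝ)) := by
  have htri := triCount_lt_degree_right hij
  have hdj : 0 < G.degree j := by omega
  have hdVN : (addVN G).degree (some j) ≤ (addVN G).degree (some i) := by
    simpa [degree_addVN_some] using hd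
  rw [Ric₀_eq_ric₀Formula hd, Ric₀_eq_ric₀Formula hdVN, degree_addVN_some, degree_addVN_some,
    triCount_addVN_some]
  push_cast
  exact ric₀Formula_sub_succ_le (by exact_mod_cast hdj.trans_le hd) (by exact_mod_cast hdj)
    (by exact_mod_cast htri)
end

section
/- For all real numbers a ≥ b ≥ 1 and every real x with 0 ≤ x ≤ b − 1, we have 2(1/a + 1/b − 1/(a+1) − 1/(b+1)) + x(2/a + 1/b) − (x+1)(2/(a+1) + 1/(b+1)) ≤ 1/(b² + b) − 2(a − b)/(a² + a). -/
/-! Since `1/t - 1/(t+1) = 1/(t² + t)`, the left-hand side is affine in `x` with slope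
`2/(a² + a) + 1/(b² + b) > 0`, and at `x = b - 1` it equals the right-hand side exactly. -/

lemma curvature_gap_eq {a b : ℝ} (ha : a ≠ 0) (ha₁ : a + 1 ≠ 0) (hb : b ≠ 0) (hb₁ : b + 1 ≠ 0)
    (x : ℝ) :
    2 * (1 / a + 1 / b - 1 / (a + 1) - 1 / (b + 1))
      + x * (2 / a + 1 / b) - (x + 1) * (2 / (a + 1) + 1 / (b + 1))
      = 1 / (b ^ 2 + b) - 2 * (a - b) / (a ^ 2 + a)
        - (b - 1 - x) * (2 / (a ^ 2 + a) + 1 / (b ^ 2 + b)) := by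
  field_simp
  ring

theorem stmt_8_general (a b x : ℝ) (hab : b ≤ a) (hb : 1 ≤ b) (hx1 : x ≤ b - 1) :
    2 * (1 / a + 1 / b - 1 / (a + 1) - 1 / (b + 1))
      + x * (2 / a + 1 / b) - (x + 1) * (2 / (a + 1) + 1 / (b + 1))
      ≤ 1 / (b ^ 2 + b) - 2 * (a - b) / (a ^ 2 + a) := by
  have hb₀ : 0 < b := by linarith
  have ha₀ : 0 < a := by linarith
  rw [curvature_gap_eq ha₀.ne' (by positivity) hb₀.ne' (by positivity)]
  have hslope : 0 ≤ (b - 1 - x) * (2 / (a ^ 2 + a) + 1 / (b ^ 2 + b)) :=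
    mul_nonneg (by linarith) (by positivity)
  linarith

/-- The algebraic inequality underlying the virtual-node curvature
proposition: for `a ≥ b ≥ 1` and `0 ≤ x ≤ b − 1`, the curvature-difference expression is
bounded by `1/(b² + b) − 2(a − b)/(a² + a)`. -/
theorem stmt_8 (a b x : ℝ) (hab : b ≤ a) (hb : 1 ≤ b) (hx0 : 0 ≤ x) (hx1 : x ≤ b - 1) :
    2 * (1 / a + 1 / b - 1 / (a + 1) - 1 / (b + 1))
      + x * (2 / a + 1 / b) - (x + 1) * (2 / (a + 1) + 1 / (b + 1))
      ≤ 1 / (b ^ 2 + b) - 2 * (a - b) / (a ^ 2 + a) :=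
  stmt_8_general a b x hab hb hx1
end

section
/- Let a ≥ b be natural numbers with b ≥ 2, a > b, and a − b ≤ b. Then 1/(b² + b) − 2(a − b)/(a² + a) ≤ 0, with equality if and only if (a, b) = (3, 2). -/
/-! Clearing denominators, the claim is `a² + a ≤ 2(a - b)(b² + b)`. Writing `d = a - b`, the
slack `2d(b² + b) - (a² + a)` equals `(b + 1)(b - 2) + (d - 1)(2b² - d - 2)`: both summands are
nonnegative when `1 ≤ d ≤ b` and `2 ≤ b`, and the second factor `2b² - d - 2` is then positive,
so the slack vanishes only for `b = 2`, `d = 1`. -/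

theorem two_mul_sub_mul_sq_add_sub_sq_add {R : Type*} [CommRing R] (a b : R) :
    2 * (a - b) * (b ^ 2 + b) - (a ^ 2 + a)
      = (b + 1) * (b - 2) + (a - b - 1) * (2 * b ^ 2 - (a - b) - 2) := by
  ring

theorem one_div_sub_div_eq_zero_iff {K : Type*} [Field K] {A B c : K} (hA : A ≠ 0) (hB : B ≠ 0) :
    1 / B - c / A = 0 ↔ A = c * B := by
  rw [sub_eq_zero, div_eq_div_iff hB hA, one_mul]

section OrderedField

variable {K : Type*} [Field K] [LinearOrder K] [IsStrictOrderedRing K]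

theorem one_div_sub_div_nonpos_iff {A B c : K} (hA : 0 < A) (hB : 0 < B) :
    1 / B - c / A ≤ 0 ↔ A ≤ c * B := by
  rw [sub_nonpos, div_le_div_iff₀ hB hA, one_mul]

variable {a b : K}

theorem two_mul_sq_sub_sub_sub_two_pos (hb : 2 ≤ b) (hd : a ≤ 2 * b) :
    0 < 2 * b ^ 2 - (a - b) - 2 := by
  nlinarith

theorem sq_add_le_two_mul_sub_mul_sq_add (hb : 2 ≤ b) (hab : b + 1 ≤ a) (hd : a ≤ 2 * b) :
    a ^ 2 + a ≤ 2 * (a - b) * (b ^ 2 + b) := by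
  have h := two_mul_sub_mul_sq_add_sub_sq_add a b
  have hfactor := two_mul_sq_sub_sub_sub_two_pos hb hd
  nlinarith [mul_nonneg (by linarith : (0 : K) ≤ b + 1) (by linarith : (0 : K) ≤ b - 2),
    mul_nonneg (by linarith : (0 : K) ≤ a - b - 1) hfactor.le]

theorem sq_add_eq_two_mul_sub_mul_sq_add_iff (hb : 2 ≤ b) (hab : b + 1 ≤ a) (hd : a ≤ 2 * b) :
    a ^ 2 + a = 2 * (a - b) * (b ^ 2 + b) ↔ a = b + 1 ∧ b = 2 := by
  have h := two_mul_sub_mul_sq_add_sub_sq_add a b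
  have hfactor := two_mul_sq_sub_sub_sub_two_pos hb hd
  have hfirst : 0 ≤ (b + 1) * (b - 2) := by nlinarith
  have hsecond : 0 ≤ (a - b - 1) * (2 * b ^ 2 - (a - b) - 2) := by nlinarith
  constructor
  · intro heq
    have hsecond_zero : (a - b - 1) * (2 * b ^ 2 - (a - b) - 2) = 0 := by linarith
    have hfirst_zero : (b + 1) * (b - 2) = 0 := by linarith
    rcases mul_eq_zero.1 hsecond_zero with hd1 | hpos
    · rcases mul_eq_zero.1 hfirst_zero with hb1 | hb2
      · linarith
      · constructor <;> linarith
    · exact absurd hpos hfactor.ne'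
  · rintro ⟨rfl, rfl⟩
    ring

end OrderedField

/-- For natural numbers `a > b ≥ 2` with degree gap `a − b ≤ b`, the
curvature-decrease upper bound `1/(b² + b) − 2(a − b)/(a² + a)` is nonpositive, with
equality exactly when `(a, b) = (3, 2)`. -/
theorem stmt_9 (a b : ℕ) (hb : 2 ≤ b) (hab : b < a) (hd : a - b ≤ b) :
    (1 / ((b : ℝ) ^ 2 + (b : ℝ)) - 2 * ((a : ℝ) - (b : ℝ)) / ((a : ℝ) ^ 2 + (a : ℝ)) ≤ 0) ∧
    (1 / ((b : ℝ) ^ 2 + (b : ℝ)) - 2 * ((a : ℝ) - (b : ℝ)) / ((a : ℝ) ^ 2 + (a : ℝ)) = 0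
      ↔ a = 3 ∧ b = 2) := by
  have hbR : (2 : ℝ) ≤ b := by exact_mod_cast hb
  have habR : (b : ℝ) + 1 ≤ a := by exact_mod_cast hab
  have hdR : (a : ℝ) ≤ 2 * b := by exact_mod_cast (by omega : a ≤ 2 * b)
  have hA : (0 : ℝ) < (a : ℝ) ^ 2 + a := by nlinarith
  have hB : (0 : ℝ) < (b : ℝ) ^ 2 + b := by nlinarith
  refine ⟨(one_div_sub_div_nonpos_iff hA hB).2 (sq_add_le_two_mul_sub_mul_sq_add hbR habR hdR), ?_⟩
  rw [one_div_sub_div_eq_zero_iff hA.ne' hB.ne', sq_add_eq_two_mul_sub_mul_sq_add_iff hbR habR hdR]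
  constructor
  · rintro ⟨ha3, hb2⟩
    rw [hb2] at ha3
    exact ⟨by exact_mod_cast (by linarith : (a : ℝ) = 3), by exact_mod_cast hb2⟩
  · rintro ⟨rfl, rfl⟩
    norm_num
end

section
/- Let G = (V,E) be a finite simple graph with |V| ≥ 2. Then the Cheeger constant of the virtual-node graph satisfies h(G^{+VN}) ≥ min{h(G) + 1, 1}; in particular, if h(G) < 1 then h(G^{+VN}) > h(G), i.e., adding the virtual node increases the Cheeger constant. -/
open Finset

attribute [local instance] Classical.propDecidable

variable {V : Type*} [Fintype V] [DecidableEq V]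

/-- The edge boundary `∂S`: the set of edges of `G` with exactly one endpoint in `S`. -/
noncomputable def edgeBoundary (G : SimpleGraph V) (S : Finset V) : Finset (Sym2 V) :=
  G.edgeFinset.filter (fun e => ∃ u v, e = s(u, v) ∧ u ∈ S ∧ v ∉ S)

/-- The Cheeger constant `h(G) = min{|∂S|/|S| : ∅ ≠ S ⊆ V, 2|S| ≤ |V|}`. -/
noncomputable def cheeger (G : SimpleGraph V) : ℝ :=
  sInf {x : ℝ | ∃ S : Finset V, S.Nonempty ∧ 2 * S.card ≤ Fintype.card V ∧
    x = ((edgeBoundary G S).card : ℝ) / (S.card : ℝ)}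

/-!
Every vertex `u ∈ V` is joined to the virtual node `v*`, so for a vertex set `T` of `G^{+VN}`
the edges `u v*` with `u` on the side of `T` or `Tᶜ` not containing `v*` all lie in `∂T`.
That side has at least `|T|` vertices when `2|T| ≤ |V| + 1`, hence `|∂T| ≥ |T|` and
`h(G^{+VN}) ≥ 1`, which already exceeds both `min{h(G) + 1, 1}` and any `h(G) < 1`.
-/

lemma edgeBoundary_compl (G : SimpleGraph V) (S : Finset V) :
    edgeBoundary G Sᶜ = edgeBoundary G S := by
  ext e
  simp only [edgeBoundary, mem_filter, mem_compl, not_not]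
  refine and_congr_right fun _ => ⟨?_, ?_⟩ <;>
    exact fun ⟨u, v, he, hu, hv⟩ => ⟨v, u, he.trans Sym2.eq_swap, hv, hu⟩

lemma le_cheeger {G : SimpleGraph V} {c : ℝ} (hV : 2 ≤ Fintype.card V)
    (h : ∀ S : Finset V, S.Nonempty → 2 * #S ≤ Fintype.card V →
      c * #S ≤ #(edgeBoundary G S)) :
    c ≤ cheeger G := by
  obtain ⟨v⟩ : Nonempty V := Fintype.card_pos_iff.mp (by omega)
  refine le_csInf ⟨_, {v}, singleton_nonempty v, by simpa using hV, rfl⟩ ?_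
  rintro x ⟨S, hS, hcard, rfl⟩
  exact (le_div_iff₀ (by exact_mod_cast hS.card_pos)).mpr (h S hS hcard)

lemma card_le_card_edgeBoundary_addVN_of_none_notMem (G : SimpleGraph V)
    {T : Finset (Option V)} (hT : none ∉ T) :
    #T ≤ #(edgeBoundary (addVN G) T) := by
  refine card_le_card_of_injOn (fun u => s(u, none)) ?_ ?_
  · rintro (_ | a) hu
    · exact absurd hu hT
    · simp only [edgeBoundary, coe_filter, SimpleGraph.mem_edgeFinset]
      exact ⟨trivial, some a, none, rfl, hu, hT⟩
  · intro u _ u' _ h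
    rcases Sym2.eq_iff.mp h with ⟨rfl, -⟩ | ⟨rfl, rfl⟩ <;> rfl

lemma card_le_card_edgeBoundary_addVN (G : SimpleGraph V) {T : Finset (Option V)}
    (hT : 2 * #T ≤ Fintype.card (Option V)) :
    #T ≤ #(edgeBoundary (addVN G) T) := by
  by_cases hnone : none ∈ T
  · have hcompl : #T ≤ #Tᶜ := by rw [card_compl]; omega
    rw [← edgeBoundary_compl]
    exact hcompl.trans
      (card_le_card_edgeBoundary_addVN_of_none_notMem G (notMem_compl.mpr hnone))
  · exact card_le_card_edgeBoundary_addVN_of_none_notMem G hnone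

lemma one_le_cheeger_addVN [Nonempty V] (G : SimpleGraph V) : 1 ≤ cheeger (addVN G) := by
  refine le_cheeger (by simp [Nat.one_le_iff_ne_zero]) fun T _ hT => ?_
  rw [one_mul]
  exact_mod_cast card_le_card_edgeBoundary_addVN G hT

/-- For a finite simple graph `G` with `|V| ≥ 2`, the Cheeger constant of
the virtual-node graph satisfies `h(G^{+VN}) ≥ min{h(G) + 1, 1}`; in particular, if
`h(G) < 1` then adding the virtual node increases the Cheeger constant. -/
theorem stmt_12 (G : SimpleGraph V) (hV : 2 ≤ Fintype.card V) :
    min (cheeger G + 1) 1 ≤ cheeger (addVN G) ∧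
    (cheeger G < 1 → cheeger G < cheeger (addVN G)) := by
  have : Nonempty V := Fintype.card_pos_iff.mp (by omega)
  have hone := one_le_cheeger_addVN G
  exact ⟨(min_le_right _ _).trans hone, fun h => h.trans_le hone⟩
end
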